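/- Let 𝒟 be a pseudo-tensor category and X, Y, Z objects such that Y is a direct summand of X ⊗ Z. Then applying Hom(−, Y) to the sequence γ_X : X⁰XX⁰X →^{ℰ_X} X⁰X →^{ev_X} 𝟙 → 0 yields an exact sequence of vector spaces 0 → Hom(𝟙, Y) → Hom(X⁰⊗X, Y) → Hom(X⁰⊗X⊗X⁰⊗X, Y). -/
import Mathlib


open CategoryTheory CategoryTheory.Limits CategoryTheory.MonoidalCategory

universe v u

/-- A morphism `f` is split if there is `g` with `f ∘ g ∘ f = f`. -/
def IsSplit {C : Type u} [Category.{v} C] {X Y : C} (f : X ⟶ Y) : Prop :=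
  ∃ g : Y ⟶ X, f ≫ g ≫ f = f

/-- The sequence `X₂ ⟶ X₁ ⟶ X₀ ⟶ 0` is exact, i.e. `q` is a cokernel of `p`. -/
def IsCokernelSeq {C : Type u} [Category.{v} C] [Preadditive C] {X₂ X₁ X₀ : C}
    (p : X₂ ⟶ X₁) (q : X₁ ⟶ X₀) : Prop :=
  p ≫ q = 0 ∧ ∀ ⦃A : C⦄ (h : X₁ ⟶ A), p ≫ h = 0 → ∃! t : X₀ ⟶ A, q ≫ t = h

/-- The sequence `0 ⟶ X₀ ⟶ X₁ ⟶ X₂` is exact, i.e. `i` is a kernel of `p`. -/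
def IsKernelSeq {C : Type u} [Category.{v} C] [Preadditive C] {X₀ X₁ X₂ : C}
    (i : X₀ ⟶ X₁) (p : X₁ ⟶ X₂) : Prop :=
  i ≫ p = 0 ∧ ∀ ⦃A : C⦄ (h : A ⟶ X₁), h ≫ p = 0 → ∃! t : A ⟶ X₀, t ≫ i = h

/-- The morphism `ℰ_X = ev_X ⊗ id_{X⁰⊗X} − id_{X⁰⊗X} ⊗ ev_X`. -/
def calE {C : Type u} [Category.{v} C] [Preadditive C] [MonoidalCategory C]
    (X Xd : C) [ExactPairing X Xd] : (Xd ⊗ X) ⊗ (Xd ⊗ X) ⟶ Xd ⊗ X :=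
  (ε_ X Xd ▷ (Xd ⊗ X)) ≫ (λ_ (Xd ⊗ X)).hom -
    ((Xd ⊗ X) ◁ ε_ X Xd) ≫ (ρ_ (Xd ⊗ X)).hom

/-- `X` (with chosen dual `Xd`) is strongly faithful: `ev_X` is the cokernel of `ℰ_X`. -/
def StronglyFaithful {C : Type u} [Category.{v} C] [Preadditive C]
    [MonoidalCategory C] (X Xd : C) [ExactPairing X Xd] : Prop :=
  IsCokernelSeq (calE X Xd) (ε_ X Xd)

set_option linter.unusedSectionVars false

section AuxStmt17

variable {C : Type u} [Category.{v} C] [Preadditive C] [MonoidalCategory C]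

theorem stmt17_sub_whiskerRight [MonoidalPreadditive C] {Y Z : C} (f g : Y ⟶ Z) (W : C) :
    (f - g) ▷ W = f ▷ W - g ▷ W := by
  rw [eq_sub_iff_add_eq, ← MonoidalPreadditive.add_whiskerRight, sub_add_cancel]

variable (X Xd : C) [ExactPairing X Xd]

theorem stmt17_calE_comp_ev : calE X Xd ≫ ε_ X Xd = 0 := by
  rw [calE, Preadditive.sub_comp, sub_eq_zero, Category.assoc, Category.assoc,
    ← leftUnitor_naturality, ← rightUnitor_naturality, whisker_exchange_assoc, unitors_equal]

/-- The splitting `Xd ⟶ (Xd ⊗ X) ⊗ Xd` obtained from the coevaluation. -/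
noncomputable def stmt17Sig : Xd ⟶ (Xd ⊗ X) ⊗ Xd :=
  𝟙 Xd ⊗≫ Xd ◁ η_ X Xd ⊗≫ 𝟙 ((Xd ⊗ X) ⊗ Xd)

theorem stmt17_sig_ev : stmt17Sig X Xd ≫ (ε_ X Xd ▷ Xd) ≫ (λ_ Xd).hom = 𝟙 Xd := by
  calc stmt17Sig X Xd ≫ (ε_ X Xd ▷ Xd) ≫ (λ_ Xd).hom
      = 𝟙 Xd ⊗≫ (Xd ◁ η_ X Xd ⊗≫ ε_ X Xd ▷ Xd) ⊗≫ 𝟙 Xd := by rw [stmt17Sig]; monoidal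
    _ = 𝟙 Xd := by rw [ExactPairing.coevaluation_evaluation'']; monoidal

/-- The contracting homotopy for the complex `γ_X ⊗ Xd`. -/
noncomputable def stmt17Hmt : (Xd ⊗ X) ⊗ Xd ⟶ ((Xd ⊗ X) ⊗ (Xd ⊗ X)) ⊗ Xd :=
  𝟙 ((Xd ⊗ X) ⊗ Xd) ⊗≫ ((Xd ⊗ X) ⊗ Xd) ◁ η_ X Xd ⊗≫ 𝟙 (((Xd ⊗ X) ⊗ (Xd ⊗ X)) ⊗ Xd)

theorem stmt17_hmt_term2 :
    stmt17Hmt X Xd ≫ (((Xd ⊗ X) ◁ ε_ X Xd ≫ (ρ_ (Xd ⊗ X)).hom) ▷ Xd) = 𝟙 ((Xd ⊗ X) ⊗ Xd) := by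
  calc stmt17Hmt X Xd ≫ (((Xd ⊗ X) ◁ ε_ X Xd ≫ (ρ_ (Xd ⊗ X)).hom) ▷ Xd)
      = 𝟙 ((Xd ⊗ X) ⊗ Xd) ⊗≫
          ((Xd ⊗ X) ◁ (Xd ◁ η_ X Xd ⊗≫ ε_ X Xd ▷ Xd)) ⊗≫ 𝟙 ((Xd ⊗ X) ⊗ Xd) := by
        rw [stmt17Hmt]; monoidal
    _ = 𝟙 ((Xd ⊗ X) ⊗ Xd) := by rw [ExactPairing.coevaluation_evaluation'']; monoidal

theorem stmt17_hmt_term1 :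
    stmt17Hmt X Xd ≫ ((ε_ X Xd ▷ (Xd ⊗ X) ≫ (λ_ (Xd ⊗ X)).hom) ▷ Xd)
      = (ε_ X Xd ▷ Xd) ≫ (λ_ Xd).hom ≫ stmt17Sig X Xd := by
  calc stmt17Hmt X Xd ≫ ((ε_ X Xd ▷ (Xd ⊗ X) ≫ (λ_ (Xd ⊗ X)).hom) ▷ Xd)
      = 𝟙 ((Xd ⊗ X) ⊗ Xd) ⊗≫
          ((Xd ⊗ X) ◁ (Xd ◁ η_ X Xd) ≫ ε_ X Xd ▷ (Xd ⊗ (X ⊗ Xd))) ⊗≫ 𝟙 ((Xd ⊗ X) ⊗ Xd) := by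
        rw [stmt17Hmt]; monoidal
    _ = 𝟙 ((Xd ⊗ X) ⊗ Xd) ⊗≫
          (ε_ X Xd ▷ (Xd ⊗ 𝟙_ C) ≫ 𝟙_ C ◁ (Xd ◁ η_ X Xd)) ⊗≫ 𝟙 ((Xd ⊗ X) ⊗ Xd) := by
        rw [← whisker_exchange]
    _ = (ε_ X Xd ▷ Xd) ≫ (λ_ Xd).hom ≫ stmt17Sig X Xd := by rw [stmt17Sig]; monoidal

theorem stmt17_hmt_calE [MonoidalPreadditive C] :
    stmt17Hmt X Xd ≫ (calE X Xd ▷ Xd)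
      = (ε_ X Xd ▷ Xd) ≫ (λ_ Xd).hom ≫ stmt17Sig X Xd - 𝟙 ((Xd ⊗ X) ⊗ Xd) := by
  rw [calE, stmt17_sub_whiskerRight, Preadditive.comp_sub, stmt17_hmt_term1, stmt17_hmt_term2]

end AuxStmt17

/-- If `B` is a direct summand of `X ⊗ Z`, then `Hom(γ_X, B)` is exact:
`0 → Hom(𝟙, B) → Hom(X⁰⊗X, B) → Hom(X⁰⊗X⊗X⁰⊗X, B)`. -/
theorem stmt17 {k : Type*} [Field k] {C : Type u} [Category.{v} C] [Preadditive C]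
    [Linear k C] [MonoidalCategory C] [SymmetricCategory C] [MonoidalPreadditive C]
    [MonoidalLinear k C] [RigidCategory C] [IsIdempotentComplete C]
    (hEnd : Function.Bijective fun a : k => a • (𝟙 (𝟙_ C)))
    (X Xd : C) [ExactPairing X Xd] (B Z : C)
    (hsummand : ∃ (i : B ⟶ X ⊗ Z) (r : X ⊗ Z ⟶ B), i ≫ r = 𝟙 B) :
    (∀ a b : 𝟙_ C ⟶ B, ε_ X Xd ≫ a = ε_ X Xd ≫ b → a = b) ∧
      (∀ u : Xd ⊗ X ⟶ B,
        (calE X Xd ≫ u = 0 ↔ ∃ a : 𝟙_ C ⟶ B, ε_ X Xd ≫ a = u)) := by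
  classical
  obtain ⟨i₀, r₀, hir₀⟩ := hsummand
  -- replace the summand `B ⊆ X ⊗ Z` by `B ⊆ Z ⊗ X` using the braiding
  obtain ⟨i, r, hir⟩ : ∃ (i : B ⟶ Z ⊗ X) (r : Z ⊗ X ⟶ B), i ≫ r = 𝟙 B :=
    ⟨i₀ ≫ (β_ X Z).hom, (β_ X Z).inv ≫ r₀, by
      rw [Category.assoc, Iso.hom_inv_id_assoc, hir₀]⟩
  letI : ExactPairing Xd X := CategoryTheory.BraidedCategory.exactPairing_swap X Xd
  -- the transposition equivalence `(W ⊗ Xd ⟶ Z) ≃ (W ⟶ Z ⊗ X)`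
  let E : ∀ W : C, (W ⊗ Xd ⟶ Z) ≃ (W ⟶ Z ⊗ X) := fun W => tensorRightHomEquiv W Xd X Z
  have Enat : ∀ {W W' : C} (h : W' ⟶ W) (f : W ⟶ Z ⊗ X),
      (E W').symm (h ≫ f) = h ▷ Xd ≫ (E W).symm f := by
    intro W W' h f
    exact tensorRightHomEquiv_symm_naturality h f
  have Ezero : ∀ {W : C}, (E W).symm 0 = 0 := by
    intro W
    simp [E, tensorRightHomEquiv]
  -- injectivity for maps into `Z ⊗ X`
  have key₁ : ∀ c : 𝟙_ C ⟶ Z ⊗ X, ε_ X Xd ≫ c = 0 → c = 0 := by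
    intro c hc
    have h1 : (E _).symm (ε_ X Xd ≫ c) = ε_ X Xd ▷ Xd ≫ (E _).symm c := Enat _ _
    rw [hc, Ezero] at h1
    replace h1 := h1.symm
    have h2 : stmt17Sig X Xd ≫ ε_ X Xd ▷ Xd ≫ (E _).symm c = 0 := by
      rw [← Category.assoc, Category.assoc, h1, Limits.comp_zero]
    have h3 : stmt17Sig X Xd ≫ ε_ X Xd ▷ Xd = (λ_ Xd).inv := by
      have := stmt17_sig_ev X Xd
      rw [← Category.assoc] at this
      calc stmt17Sig X Xd ≫ ε_ X Xd ▷ Xd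
          = ((stmt17Sig X Xd ≫ ε_ X Xd ▷ Xd) ≫ (λ_ Xd).hom) ≫ (λ_ Xd).inv := by simp
        _ = (λ_ Xd).inv := by rw [this, Category.id_comp]
    rw [← Category.assoc, h3] at h2
    have h4 : (E (𝟙_ C)).symm c = 0 := by
      have := congrArg (fun t => (λ_ Xd).hom ≫ t) h2
      simpa using this
    apply (E (𝟙_ C)).symm.injective
    rw [h4, Ezero]
  -- factorization for maps into `Z ⊗ X`
  have key₂ : ∀ u : Xd ⊗ X ⟶ Z ⊗ X, calE X Xd ≫ u = 0 →
      ∃ a : 𝟙_ C ⟶ Z ⊗ X, ε_ X Xd ≫ a = u := by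
    intro u hu
    set g : (Xd ⊗ X) ⊗ Xd ⟶ Z := (E _).symm u with hg
    have h1 : calE X Xd ▷ Xd ≫ g = 0 := by
      rw [hg, ← Enat, hu, Ezero]
    have h2 : stmt17Hmt X Xd ≫ calE X Xd ▷ Xd ≫ g = 0 := by rw [h1]; simp
    rw [← Category.assoc, stmt17_hmt_calE, Preadditive.sub_comp, Category.id_comp,
      sub_eq_zero] at h2
    -- h2 : ((ε ▷ Xd) ≫ λ ≫ sig) ≫ g = g
    set g₀ : 𝟙_ C ⊗ Xd ⟶ Z := (λ_ Xd).hom ≫ stmt17Sig X Xd ≫ g with hg₀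
    refine ⟨E (𝟙_ C) g₀, ?_⟩
    apply (E (Xd ⊗ X)).symm.injective
    rw [Enat, Equiv.symm_apply_apply, hg₀, ← hg]
    calc ε_ X Xd ▷ Xd ≫ (λ_ Xd).hom ≫ stmt17Sig X Xd ≫ g
        = (((ε_ X Xd ▷ Xd) ≫ (λ_ Xd).hom ≫ stmt17Sig X Xd) ≫ g) := by simp
      _ = g := h2
  constructor
  · intro a b hab
    have h1 : ε_ X Xd ≫ (a ≫ i - b ≫ i) = 0 := by
      rw [Preadditive.comp_sub, ← Category.assoc, ← Category.assoc, hab, sub_self]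
    have h2 := key₁ _ h1
    rw [sub_eq_zero] at h2
    calc a = a ≫ i ≫ r := by rw [hir, Category.comp_id]
      _ = b ≫ i ≫ r := by rw [← Category.assoc, h2, Category.assoc]
      _ = b := by rw [hir, Category.comp_id]
  · intro u
    constructor
    · intro hu
      have h1 : calE X Xd ≫ (u ≫ i) = 0 := by
        rw [← Category.assoc, hu, Limits.zero_comp]
      obtain ⟨a, ha⟩ := key₂ _ h1
      refine ⟨a ≫ r, ?_⟩
      rw [← Category.assoc, ha, Category.assoc, hir, Category.comp_id]
    · rintro ⟨a, rfl⟩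
      rw [← Category.assoc, stmt17_calE_comp_ev, Limits.zero_comp]
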